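/- arXiv:1201.3250 — 3 statements merged into one kernel-verified Lean document; each statement's English description precedes it below -/
import Mathlib

section
/- Let k ≥ 1 and let a_0, a_1, …, a_l be natural numbers such that a_i ≤ a_{i−1} + 1 for all 1 ≤ i ≤ l and a_0 = min{a_i : 0 ≤ i ≤ l}. Let G ⊆ {0, 1, …, l−1} be a set with |G| ≥ 2^k − 1. Then there exists e ≤ l with e−1 ∈ G such that the set H_e := {i ≤ e−1 : a_i ≤ a_j for all i ≤ j ≤ e, and a_i < a_j for all i < j ≤ n_G(i)} has at least k elements. -/
private lemma sInf_transfer {G G₂ : Finset ℕ} (hsub : G₂ ⊆ G) {i m : ℕ}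
    (hm : m ∈ G₂) (him : i ≤ m) :
    sInf {g : ℕ | g ∈ G ∧ i ≤ g} ≤ sInf {g : ℕ | g ∈ G₂ ∧ i ≤ g} := by
  have hne : {g : ℕ | g ∈ G₂ ∧ i ≤ g}.Nonempty := ⟨m, hm, him⟩
  have h := Nat.sInf_mem hne
  exact Nat.sInf_le ⟨hsub h.1, h.2⟩

private lemma aux_increasing (l : ℕ) (a : ℕ → ℕ)
    (hstep : ∀ i < l, a (i + 1) ≤ a i + 1) :
    ∀ k (G : Finset ℕ) (s r w : ℕ),
      r ≤ l → G.Nonempty → (∀ g ∈ G, s ≤ g ∧ g < r) →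
      (∀ j, s ≤ j → j ≤ r → w ≤ a j) →
      (∃ i₀, s ≤ i₀ ∧ (∀ g ∈ G, i₀ ≤ g) ∧ a i₀ = w) →
      2 ^ k - 1 ≤ G.card →
      ∃ e S, 1 ≤ e ∧ e ≤ r ∧ e - 1 ∈ G ∧ Finset.card S = k ∧
        ∀ i ∈ S, s ≤ i ∧ i ≤ e - 1 ∧ (∀ j, i ≤ j → j ≤ e → a i ≤ a j) ∧
          (∀ j, i < j → j ≤ sInf {g : ℕ | g ∈ G ∧ i ≤ g} → a i < a j) := by
  intro k
  induction k with
  | zero =>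
    intro G s r w hr hGne hGsr hfloor hwit hcard
    obtain ⟨g, hg⟩ := hGne
    refine ⟨g + 1, ∅, by omega, by have := (hGsr g hg).2; omega, by simpa using hg,
      Finset.card_empty, by intro i hi; simp at hi⟩
  | succ k ih =>
    intro G s r w hr hGne hGsr hfloor hwit hcard
    obtain ⟨i₀, hi₀s, hi₀le, hi₀w⟩ := hwit
    set g₁ := G.min' hGne with hg₁def
    have hg₁G : g₁ ∈ G := G.min'_mem hGne
    have hg₁r : g₁ < r := (hGsr g₁ hg₁G).2
    have hsg₁ : s ≤ g₁ := (hGsr g₁ hg₁G).1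
    -- the bottom element istar : last index in [s, g₁] with value w
    have hIne : ((Finset.Icc s g₁).filter (fun i => a i = w)).Nonempty :=
      ⟨i₀, Finset.mem_filter.mpr ⟨Finset.mem_Icc.mpr ⟨hi₀s, hi₀le g₁ hg₁G⟩, hi₀w⟩⟩
    set istar := ((Finset.Icc s g₁).filter (fun i => a i = w)).max' hIne with histardef
    have histarmem := Finset.max'_mem _ hIne
    rw [Finset.mem_filter, Finset.mem_Icc] at histarmem
    obtain ⟨⟨hsistar, histarg₁⟩, haw⟩ := histarmem
    have hstrictstar : ∀ j, istar < j → j ≤ g₁ → w < a j := by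
      intro j h1 h2
      have hws : w ≤ a j := hfloor j (le_trans hsistar (le_of_lt h1)) (le_trans h2 hg₁r.le)
      rcases hws.lt_or_eq with h | h
      · exact h
      · exfalso
        have hjmem : j ∈ (Finset.Icc s g₁).filter (fun i => a i = w) :=
          Finset.mem_filter.mpr ⟨Finset.mem_Icc.mpr ⟨le_trans hsistar h1.le, h2⟩, h.symm⟩
        have := Finset.le_max' _ j hjmem
        omega
    have cond2star : ∀ j, istar < j → j ≤ sInf {g : ℕ | g ∈ G ∧ istar ≤ g} → a istar < a j := by
      intro j h1 h2
      have hnle : sInf {g : ℕ | g ∈ G ∧ istar ≤ g} ≤ g₁ := Nat.sInf_le ⟨hg₁G, histarg₁⟩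
      rw [haw]
      exact hstrictstar j h1 (h2.trans hnle)
    have cond1star : ∀ e', e' ≤ r → ∀ j, istar ≤ j → j ≤ e' → a istar ≤ a j := by
      intro e' he' j h1 h2
      rw [haw]
      exact hfloor j (hsistar.trans h1) (h2.trans he')
    rcases Nat.eq_zero_or_pos k with rfl | hkpos
    · -- k + 1 = 1 : take e = g₁ + 1, S = {istar}
      refine ⟨g₁ + 1, {istar}, by omega, by omega, by simpa using hg₁G,
        Finset.card_singleton _, ?_⟩
      intro i hi
      rw [Finset.mem_singleton] at hi
      subst hi
      exact ⟨hsistar, by omega, cond1star (g₁ + 1) (by omega), cond2star⟩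
    · -- general step, k ≥ 1
      have h2k : 2 ≤ 2 ^ k := by
        calc (2 : ℕ) = 2 ^ 1 := rfl
        _ ≤ 2 ^ k := Nat.pow_le_pow_right (by norm_num) hkpos
      have h2k1 : 2 ^ (k + 1) = 2 * 2 ^ k := by ring
      -- q : least argmin of a on [g₁+1, r]
      have hTne : (Finset.Icc (g₁ + 1) r).Nonempty := ⟨g₁ + 1, Finset.mem_Icc.mpr ⟨le_rfl, hg₁r⟩⟩
      obtain ⟨q0, hq0mem, hq0min⟩ := Finset.exists_min_image (Finset.Icc (g₁ + 1) r) a hTne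
      rw [Finset.mem_Icc] at hq0mem
      have hwleq : ∀ j, g₁ + 1 ≤ j → j ≤ r → a q0 ≤ a j := fun j h1 h2 =>
        hq0min j (Finset.mem_Icc.mpr ⟨h1, h2⟩)
      set Q := {j : ℕ | (g₁ + 1 ≤ j ∧ j ≤ r) ∧ a j = a q0} with hQdef
      have hQne : Q.Nonempty := ⟨q0, ⟨hq0mem, rfl⟩⟩
      set q := sInf Q with hqdef
      have hqQ : q ∈ Q := Nat.sInf_mem hQne
      obtain ⟨⟨hqg₁, hqr⟩, hqa⟩ := hqQ
      have hqleast : ∀ j, g₁ + 1 ≤ j → j < q → j ≤ r → a q0 < a j := by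
        intro j h1 h2 h3
        rcases (hwleq j h1 h3).lt_or_eq with h | h
        · exact h
        · exact absurd (Nat.sInf_le (show j ∈ Q from ⟨⟨h1, h3⟩, h.symm⟩)) (by omega)
      have hwq0 : w ≤ a q0 := hfloor q0 (hsg₁.trans (by omega)) hq0mem.2
      set A := G.filter (fun g => q ≤ g) with hAdef
      by_cases hA : 2 ^ k - 1 ≤ A.card
      · -- Case A : recurse on the elements of G at or beyond q
        have hAne : A.Nonempty := Finset.card_pos.mp (by omega)
        obtain ⟨e, S, he1, her, heA, hScard, hS⟩ :=
          ih A q r (a q0) hr hAne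
            (fun g hg => ⟨(Finset.mem_filter.mp hg).2, (hGsr g (Finset.mem_filter.mp hg).1).2⟩)
            (fun j h1 h2 => hwleq j (hqg₁.trans h1) h2)
            ⟨q, le_rfl, fun g hg => (Finset.mem_filter.mp hg).2, hqa⟩
            hA
        have hAsub : A ⊆ G := Finset.filter_subset _ G
        have heG : e - 1 ∈ G := hAsub heA
        have heq : q ≤ e - 1 := (Finset.mem_filter.mp heA).2
        refine ⟨e, insert istar S, he1, her, heG, ?_, ?_⟩
        · rw [Finset.card_insert_of_notMem, hScard]
          intro hmem
          have := (hS istar hmem).1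
          omega
        · intro i hi
          rcases Finset.mem_insert.mp hi with rfl | hiS
          · exact ⟨hsistar, by omega, cond1star e her, cond2star⟩
          · obtain ⟨hqi, hie, hc1, hc2⟩ := hS i hiS
            refine ⟨by omega, hie, hc1, ?_⟩
            intro j h1 h2
            exact hc2 j h1 (h2.trans (sInf_transfer hAsub heA hie))
      · -- Case B : recurse on a block of small elements of G, with floor raised to w + 1
        set C := G.filter (fun g => ¬ q ≤ g) with hCdef
        have hcardsplit : A.card + C.card = G.card :=
          Finset.card_filter_add_card_filter_not (fun g => q ≤ g)
        have hg₁C : g₁ ∈ C := Finset.mem_filter.mpr ⟨hg₁G, by omega⟩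
        set B := C.erase g₁ with hBdef
        have hBC : B.card = C.card - 1 := Finset.card_erase_of_mem hg₁C
        have hg₁Cpos : 1 ≤ C.card := Finset.card_pos.mpr ⟨g₁, hg₁C⟩
        have hBcard : 2 ^ k ≤ B.card := by omega
        obtain ⟨G₂', hG₂'sub, hG₂'card⟩ := Finset.exists_subset_card_eq hBcard
        have hG₂'ne : G₂'.Nonempty := Finset.card_pos.mp (by omega)
        set b := G₂'.max' hG₂'ne with hbdef
        set G₂ := G₂'.erase b with hG₂def
        have hbmem : b ∈ G₂' := G₂'.max'_mem hG₂'ne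
        have hBfacts : ∀ g ∈ G₂', g ∈ G ∧ g₁ + 1 ≤ g ∧ g < q := by
          intro g hg
          have hg' := hG₂'sub hg
          have hne := Finset.ne_of_mem_erase hg'
          have hgC := Finset.mem_of_mem_erase hg'
          obtain ⟨hgG, hgq⟩ := Finset.mem_filter.mp hgC
          have hmin' : g₁ ≤ g := Finset.min'_le G g hgG
          exact ⟨hgG, by omega, by omega⟩
        have hG₂card : G₂.card = 2 ^ k - 1 := by
          rw [Finset.card_erase_of_mem hbmem, hG₂'card]
        have hG₂ne : G₂.Nonempty := Finset.card_pos.mp (by omega)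
        have hbq : b < q := (hBfacts b hbmem).2.2
        have hG₂facts : ∀ g ∈ G₂, g ∈ G ∧ g₁ + 1 ≤ g ∧ g + 2 ≤ q ∧ istar + 1 ≤ g := by
          intro g hg
          have hgB := hBfacts g (Finset.mem_of_mem_erase hg)
          have hlt : g < b :=
            lt_of_le_of_ne (Finset.le_max' _ _ (Finset.mem_of_mem_erase hg))
              (Finset.ne_of_mem_erase hg)
          exact ⟨hgB.1, hgB.2.1, by omega, by omega⟩
        have hfloor₂ : ∀ j, istar + 1 ≤ j → j ≤ q - 1 → w + 1 ≤ a j := by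
          intro j h1 h2
          by_cases hj : j ≤ g₁
          · exact hstrictstar j (by omega) hj
          · have := hqleast j (by omega) (by omega) (by omega)
            omega
        obtain ⟨g₂₀, hg₂₀⟩ := Finset.card_pos.mp (show 0 < G₂.card by omega)
        have hq2 : istar + 1 ≤ q - 1 := by have := hG₂facts g₂₀ hg₂₀; omega
        have hwit₂a : a (istar + 1) ≤ w + 1 := by
          have hw' : a (istar + 1) ≤ a istar + 1 := hstep istar (by omega)
          rw [haw] at hw'
          omega
        have hwit₂ : a (istar + 1) = w + 1 :=
          le_antisymm hwit₂a (hfloor₂ _ le_rfl hq2)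
        obtain ⟨e, S, he1, her₂, heG₂, hScard, hS⟩ :=
          ih G₂ (istar + 1) (q - 1) (w + 1) (by omega) hG₂ne
            (fun g hg => ⟨(hG₂facts g hg).2.2.2, by have := hG₂facts g hg; omega⟩)
            hfloor₂
            ⟨istar + 1, le_rfl, fun g hg => (hG₂facts g hg).2.2.2, hwit₂⟩
            (le_of_eq hG₂card.symm)
        have hG₂sub : G₂ ⊆ G := fun g hg => (hG₂facts g hg).1
        have heG : e - 1 ∈ G := hG₂sub heG₂
        have he1g : g₁ + 1 ≤ e - 1 := (hG₂facts _ heG₂).2.1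
        refine ⟨e, insert istar S, he1, by omega, heG, ?_, ?_⟩
        · rw [Finset.card_insert_of_notMem, hScard]
          intro hmem
          have := (hS istar hmem).1
          omega
        · intro i hi
          rcases Finset.mem_insert.mp hi with rfl | hiS
          · exact ⟨hsistar, by omega, cond1star e (by omega), cond2star⟩
          · obtain ⟨h1, h2, h3, h4⟩ := hS i hiS
            refine ⟨by omega, h2, h3, ?_⟩
            intro j hj1 hj2
            exact h4 j hj1 (hj2.trans (sInf_transfer hG₂sub heG₂ h2))

/-- **Lemma (increasing number sequence).** Let `a₀,…,a_l` be natural numbers with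
`a_{i+1} ≤ a_i + 1` and `a₀` minimal, and let `G ⊆ {0,…,l-1}` with `|G| ≥ 2^k - 1`.
Then there is `e ≤ l` with `e - 1 ∈ G` such that the set `H_e` has at least `k`
elements. -/
theorem increasing_number_sequence (k l : ℕ) (hk : 1 ≤ k) (a : ℕ → ℕ)
    (hstep : ∀ i < l, a (i + 1) ≤ a i + 1)
    (hmin : ∀ i ≤ l, a 0 ≤ a i)
    (G : Finset ℕ) (hGsub : ∀ g ∈ G, g < l) (hcard : 2 ^ k - 1 ≤ G.card) :
    ∃ e, 1 ≤ e ∧ e ≤ l ∧ e - 1 ∈ G ∧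
      k ≤ {i : ℕ | i ≤ e - 1 ∧ (∀ j, i ≤ j → j ≤ e → a i ≤ a j) ∧
        (∀ j, i < j → j ≤ sInf {g : ℕ | g ∈ G ∧ i ≤ g} → a i < a j)}.ncard := by
  have h2k : 2 ≤ 2 ^ k := by
    calc (2 : ℕ) = 2 ^ 1 := rfl
    _ ≤ 2 ^ k := Nat.pow_le_pow_right (by norm_num) hk
  have hGne : G.Nonempty := Finset.card_pos.mp (by omega)
  obtain ⟨e, S, he1, hel, heG, hScard, hS⟩ :=
    aux_increasing l a hstep k G 0 l (a 0) le_rfl hGne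
      (fun g hg => ⟨Nat.zero_le _, hGsub g hg⟩)
      (fun j _ hj => hmin j hj)
      ⟨0, le_rfl, fun g _ => Nat.zero_le g, rfl⟩
      hcard
  refine ⟨e, he1, hel, heG, ?_⟩
  have hsub : (↑S : Set ℕ) ⊆ {i : ℕ | i ≤ e - 1 ∧ (∀ j, i ≤ j → j ≤ e → a i ≤ a j) ∧
      (∀ j, i < j → j ≤ sInf {g : ℕ | g ∈ G ∧ i ≤ g} → a i < a j)} := by
    intro i hi
    obtain ⟨_, h2, h3, h4⟩ := hS i (by exact_mod_cast hi)
    exact ⟨h2, h3, h4⟩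
  have hfin : ({i : ℕ | i ≤ e - 1 ∧ (∀ j, i ≤ j → j ≤ e → a i ≤ a j) ∧
      (∀ j, i < j → j ≤ sInf {g : ℕ | g ∈ G ∧ i ≤ g} → a i < a j)}).Finite :=
    (Set.finite_Iic (e - 1)).subset (fun i hi => hi.1)
  calc k = S.card := hScard.symm
  _ = (↑S : Set ℕ).ncard := (Set.ncard_coe_finset S).symm
  _ ≤ _ := Set.ncard_le_ncard hsub hfin
end

section
/- Let k ≥ 1 and let a_0, a_1, …, a_l be positive natural numbers such that a_i ≤ a_{i−1} + 1 for all 1 ≤ i ≤ l. Let G ⊆ {0, 1, …, l−1} be a set with |G| ≥ a_0 · 2^k. Then there exist indices 0 ≤ b < e ≤ l such that: (1) e−1 ∈ G; (2) a_b = min{a_i : b ≤ i ≤ e}; (3) a_i > a_b for each 0 ≤ i < b; and (4) the set H_{b,e} := {i : b ≤ i ≤ e−1, a_i ≤ a_j for all i ≤ j ≤ e, and a_i < a_j for all i < j ≤ n_G(i)} has at least k elements. -/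
namespace IncSeqAux

def Hs (a : ℕ → ℕ) (G : Finset ℕ) (b e : ℕ) : Set ℕ :=
  {i : ℕ | b ≤ i ∧ i ≤ e - 1 ∧ (∀ j, i ≤ j → j ≤ e → a i ≤ a j) ∧
    (∀ j, i < j → j ≤ sInf {g : ℕ | g ∈ G ∧ i ≤ g} → a i < a j)}

lemma Hs_finite (a : ℕ → ℕ) (G : Finset ℕ) (b e : ℕ) : (Hs a G b e).Finite :=
  (Set.finite_Icc b (e - 1)).subset fun i hi => Set.mem_Icc.2 ⟨hi.1, hi.2.1⟩

lemma Hs_lift (a : ℕ → ℕ) {G G' : Finset ℕ} (hGG : G' ⊆ G) {b b' e : ℕ}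
    (hbb : b ≤ b') (he : e - 1 ∈ G') : Hs a G' b' e ⊆ Hs a G b e := by
  rintro i ⟨h1, h2, h3, h4⟩
  refine ⟨le_trans hbb h1, h2, h3, fun j hj1 hj2 => h4 j hj1 (le_trans hj2 ?_)⟩
  have hne' : {g : ℕ | g ∈ G' ∧ i ≤ g}.Nonempty := ⟨e - 1, he, h2⟩
  have hmem := Nat.sInf_mem hne'
  exact Nat.sInf_le ⟨hGG hmem.1, hmem.2⟩

lemma sum_rank_bound : ∀ (n : ℕ) (W : Finset ℕ) (κ : ℕ) (f : ℕ → ℕ),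
    W.card = n → W.card ≤ κ →
    (∀ p ∈ W, f p ≤ 2 ^ (κ - (W.filter (fun q => q ≤ p)).card)) →
    (∑ p ∈ W, f p) + 2 ^ (κ - W.card) ≤ 2 ^ κ := by
  intro n
  induction n with
  | zero =>
    intro W κ f hn _ _
    obtain rfl : W = ∅ := Finset.card_eq_zero.mp hn
    simp
  | succ n ih =>
    intro W κ f hn hκ hf
    have hne : W.Nonempty := Finset.card_pos.mp (by omega)
    have hMx : W.max' hne ∈ W := W.max'_mem hne
    have hW' : (W.erase (W.max' hne)).card = n := by
      rw [Finset.card_erase_of_mem hMx, hn]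
      omega
    have hfilterMx : W.filter (fun q => q ≤ W.max' hne) = W :=
      Finset.filter_true_of_mem fun q hq => W.le_max' q hq
    have hrank : ∀ p ∈ W.erase (W.max' hne),
        (W.erase (W.max' hne)).filter (fun q => q ≤ p) = W.filter (fun q => q ≤ p) := by
      intro p hp
      have hpW := Finset.mem_of_mem_erase hp
      have hpne := Finset.ne_of_mem_erase hp
      have hplt : p < W.max' hne := lt_of_le_of_ne (W.le_max' p hpW) hpne
      ext q
      simp only [Finset.mem_filter, Finset.mem_erase]
      constructor
      · rintro ⟨⟨_, hq⟩, hqp⟩; exact ⟨hq, hqp⟩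
      · rintro ⟨hq, hqp⟩; exact ⟨⟨by omega, hq⟩, hqp⟩
    have hf' : ∀ p ∈ W.erase (W.max' hne),
        f p ≤ 2 ^ (κ - ((W.erase (W.max' hne)).filter (fun q => q ≤ p)).card) := by
      intro p hp
      rw [hrank p hp]
      exact hf p (Finset.mem_of_mem_erase hp)
    have hsub := ih (W.erase (W.max' hne)) κ f hW' (by omega) hf'
    have hsum : (∑ p ∈ W.erase (W.max' hne), f p) + f (W.max' hne) = ∑ p ∈ W, f p :=
      Finset.sum_erase_add W f hMx
    have hfMx : f (W.max' hne) ≤ 2 ^ (κ - W.card) := by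
      have := hf (W.max' hne) hMx
      rwa [hfilterMx] at this
    have hpow : 2 ^ (κ - n) = 2 ^ (κ - (n + 1)) + 2 ^ (κ - (n + 1)) := by
      have h1 : κ - n = (κ - (n + 1)) + 1 := by omega
      rw [h1, pow_succ]; ring
    rw [hW'] at hsub
    rw [hn] at hfMx ⊢
    linarith

lemma main (l : ℕ) (a : ℕ → ℕ) (hstep : ∀ i < l, a (i + 1) ≤ a i + 1) :
    ∀ fuel κ : ℕ, ∀ G : Finset ℕ, ∀ s : ℕ,
    1 ≤ κ → κ + G.card ≤ fuel → (∀ g ∈ G, g < l) → (∀ g ∈ G, s ≤ g) →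
    ∀ hne : G.Nonempty,
    (a s + 1) * 2 ^ κ ≤ G.card + 1 + sInf (a '' Set.Icc s (G.max' hne + 1)) * 2 ^ κ →
    ∃ b e, s ≤ b ∧ b < e ∧ e ≤ l ∧ e - 1 ∈ G ∧
      (∀ i, b ≤ i → i ≤ e → a b ≤ a i) ∧
      (∀ i, s ≤ i → i < b → a b < a i) ∧
      κ ≤ (Hs a G b e).ncard := by
  intro fuel
  induction fuel with
  | zero =>
    intro κ G s hκ hfuel _ _ _ _
    exact absurd hfuel (by omega)
  | succ fuel ih =>
    intro κ G s hκ hfuel hGl hGs hne hbud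
    set M := G.max' hne with hMdef
    have hMmem : M ∈ G := G.max'_mem hne
    have hMl : M < l := hGl M hMmem
    have hsM : s ≤ M := hGs M hMmem
    set μ := sInf (a '' Set.Icc s (M + 1)) with hμdef
    have hμle : ∀ i, s ≤ i → i ≤ M + 1 → μ ≤ a i := fun i h1 h2 =>
      Nat.sInf_le ⟨i, Set.mem_Icc.2 ⟨h1, h2⟩, rfl⟩
    have hμas : μ ≤ a s := hμle s le_rfl (by omega)
    have h2κ : 2 ≤ 2 ^ κ := by
      have := Nat.pow_le_pow_right (by norm_num : 1 ≤ 2) hκ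
      simpa using this
    have hGcardpos : 0 < G.card := Finset.card_pos.mpr hne
    by_cases hP : ∃ i, s ≤ i ∧ i ≤ M ∧ a i = μ
    · -- CASE β : the minimum is attained at or before M
      obtain ⟨ip, hip1, hip2, hip3⟩ := hP
      set P := (Finset.Icc s M).filter (fun i => a i = μ) with hPdef
      have hmemP : ∀ i, i ∈ P ↔ (s ≤ i ∧ i ≤ M) ∧ a i = μ := by
        intro i
        rw [hPdef]
        simp [Finset.mem_filter, Finset.mem_Icc]
      have hPne : P.Nonempty := ⟨ip, (hmemP ip).2 ⟨⟨hip1, hip2⟩, hip3⟩⟩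
      set i1 := P.min' hPne with hi1def
      have hi1P : i1 ∈ P := Finset.min'_mem _ _
      have hi1s : s ≤ i1 := ((hmemP i1).1 hi1P).1.1
      have hi1M : i1 ≤ M := ((hmemP i1).1 hi1P).1.2
      have hai1 : a i1 = μ := ((hmemP i1).1 hi1P).2
      have hPmin : ∀ p ∈ P, i1 ≤ p := fun p hp => Finset.min'_le _ _ hp
      have hfirst : ∀ i, s ≤ i → i < i1 → μ < a i := by
        intro i h1 h2
        have hle := hμle i h1 (by omega)
        rcases lt_or_eq_of_le hle with h | h
        · exact h
        · exfalso
          have hiP : i ∈ P := (hmemP i).2 ⟨⟨h1, by omega⟩, h.symm⟩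
          exact absurd (hPmin i hiP) (by omega)
      set hd : ℕ → ℕ := fun g => Nat.findGreatest (fun q => q ∈ P) g with hhddef
      have hdP : ∀ g, i1 ≤ g → hd g ∈ P := by
        intro g h
        simp only [hhddef]
        exact Nat.findGreatest_spec h hi1P
      have hdle : ∀ g, hd g ≤ g := by
        intro g
        simp only [hhddef]
        exact Nat.findGreatest_le g
      have hdub : ∀ g q, q ∈ P → q ≤ g → q ≤ hd g := by
        intro g q hq hqg
        simp only [hhddef]
        exact Nat.le_findGreatest hqg hq
      set Gr := G.filter (fun g => i1 ≤ g) with hGrdef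
      set B0 := G.filter (fun g => ¬ i1 ≤ g) with hB0def
      have hmemGr : ∀ g, g ∈ Gr ↔ g ∈ G ∧ i1 ≤ g := by
        intro g; rw [hGrdef]; exact Finset.mem_filter
      have hmemB0 : ∀ g, g ∈ B0 ↔ g ∈ G ∧ ¬ i1 ≤ g := by
        intro g; rw [hB0def]; exact Finset.mem_filter
      have hsplitc : Gr.card + B0.card = G.card := by
        rw [hGrdef, hB0def]
        exact Finset.card_filter_add_card_filter_not (p := fun g => i1 ≤ g)
      set WH := Gr.image hd with hWHdef
      have hmemWH : ∀ p, p ∈ WH ↔ ∃ g ∈ Gr, hd g = p := by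
        intro p; rw [hWHdef]; exact Finset.mem_image
      have hMGr : M ∈ Gr := (hmemGr M).2 ⟨hMmem, hi1M⟩
      have claim1 : ∀ p ∈ WH, a p = μ ∧ i1 ≤ p ∧ p ≤ M ∧
          (∀ j, p ≤ j → j ≤ M + 1 → a p ≤ a j) ∧
          (∀ j, p < j → j ≤ sInf {g : ℕ | g ∈ G ∧ p ≤ g} → a p < a j) := by
        intro p hp
        obtain ⟨g, hgGr, hgp⟩ := (hmemWH p).1 hp
        obtain ⟨hgG, hi1g⟩ := (hmemGr g).1 hgGr
        have hpP : p ∈ P := by rw [← hgp]; exact hdP g hi1g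
        have hap : a p = μ := ((hmemP p).1 hpP).2
        have hps : s ≤ p := ((hmemP p).1 hpP).1.1
        have hpg : p ≤ g := by rw [← hgp]; exact hdle g
        have hgM : g ≤ M := G.le_max' g hgG
        refine ⟨hap, hPmin _ hpP, le_trans hpg hgM, ?_, ?_⟩
        · intro j h1 h2; rw [hap]; exact hμle j (le_trans hps h1) h2
        · intro j h1 h2
          have hnle : sInf {g' : ℕ | g' ∈ G ∧ p ≤ g'} ≤ g := Nat.sInf_le ⟨hgG, hpg⟩
          have hjg : j ≤ g := le_trans h2 hnle
          have hjs : s ≤ j := by omega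
          have hjM : j ≤ M := le_trans hjg hgM
          have hle := hμle j hjs (by omega)
          rw [hap]
          rcases lt_or_eq_of_le hle with h | h
          · exact h
          · exfalso
            have hjP : j ∈ P := (hmemP j).2 ⟨⟨hjs, hjM⟩, h.symm⟩
            have := hdub g j hjP hjg
            rw [hgp] at this
            omega
      by_cases hW : κ ≤ WH.card
      · -- β.1 : enough block heads
        refine ⟨i1, M + 1, hi1s, by omega, by omega, by simpa using hMmem, ?_, ?_, ?_⟩
        · intro i h1 h2; rw [hai1]; exact hμle i (le_trans hi1s h1) h2
        · intro i h1 h2; rw [hai1]; exact hfirst i h1 h2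
        · have hsub : (↑WH : Set ℕ) ⊆ Hs a G i1 (M + 1) := by
            intro p hp
            obtain ⟨hap, h1, h2, h3, h4⟩ := claim1 p (Finset.mem_coe.1 hp)
            exact ⟨h1, by omega, h3, h4⟩
          calc κ ≤ WH.card := hW
            _ = (↑WH : Set ℕ).ncard := (Set.ncard_coe_finset WH).symm
            _ ≤ (Hs a G i1 (M + 1)).ncard :=
                Set.ncard_le_ncard hsub (Hs_finite _ _ _ _)
      · -- β.2
        push_neg at hW
        set Gint : ℕ → Finset ℕ :=
          fun p => G.filter (fun g => p < g ∧ hd g = p ∧ g + 1 ∉ P ∧ g ≠ M) with hGintdef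
        have hmemGint : ∀ p g, g ∈ Gint p ↔
            g ∈ G ∧ (p < g ∧ hd g = p ∧ g + 1 ∉ P ∧ g ≠ M) := by
          intro p g
          simp only [hGintdef]
          exact Finset.mem_filter
        by_cases hrich : ∃ p ∈ WH,
            2 ^ (κ - (WH.filter (fun q => q ≤ p)).card) ≤ (Gint p).card + 1
        · -- RICH : recurse into a block
          obtain ⟨p, hpWH, hrichp⟩ := hrich
          obtain ⟨hap, hi1p, hpM, hsufp, hstrictp⟩ := claim1 p hpWH
          have hps : s ≤ p := le_trans hi1s hi1p
          have hj1 : 1 ≤ (WH.filter (fun q => q ≤ p)).card :=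
            Finset.card_pos.2 ⟨p, Finset.mem_filter.2 ⟨hpWH, le_rfl⟩⟩
          have hjW : (WH.filter (fun q => q ≤ p)).card ≤ WH.card := Finset.card_filter_le _ _
          have hκ' : 1 ≤ κ - (WH.filter (fun q => q ≤ p)).card := by omega
          have hGintne : (Gint p).Nonempty := by
            rw [← Finset.card_pos]
            have h2' : 2 ≤ 2 ^ (κ - (WH.filter (fun q => q ≤ p)).card) := by
              have := Nat.pow_le_pow_right (by norm_num : 1 ≤ 2) hκ'
              simpa using this
            omega
          obtain ⟨hXG, hpX, hhdX, hX1P, hXneM⟩ :=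
            (hmemGint p ((Gint p).max' hGintne)).1 (Finset.max'_mem _ _)
          have hXM : (Gint p).max' hGintne ≤ M := G.le_max' _ hXG
          have hinterior : ∀ i, p + 1 ≤ i → i ≤ (Gint p).max' hGintne + 1 → μ + 1 ≤ a i := by
            intro i h1 h2
            have hle := hμle i (by omega) (by omega)
            rcases lt_or_eq_of_le hle with h | h
            · exact h
            · exfalso
              have hiP : i ∈ P := (hmemP i).2 ⟨⟨by omega, by omega⟩, h.symm⟩
              rcases Nat.lt_or_ge i ((Gint p).max' hGintne + 1) with hc | hc
              · have := hdub ((Gint p).max' hGintne) i hiP (by omega)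
                rw [hhdX] at this
                omega
              · have hieq : i = (Gint p).max' hGintne + 1 := by omega
                rw [hieq] at hiP
                exact hX1P hiP
          have hap1 : a (p + 1) = μ + 1 := by
            have hle : a (p + 1) ≤ μ + 1 := by
              have := hstep p (by omega)
              omega
            have hge := hinterior (p + 1) le_rfl (by omega)
            omega
          have hμp : sInf (a '' Set.Icc (p + 1) ((Gint p).max' hGintne + 1)) = μ + 1 := by
            have hne' : (a '' Set.Icc (p + 1) ((Gint p).max' hGintne + 1)).Nonempty :=
              ⟨a (p + 1), p + 1, Set.mem_Icc.2 ⟨le_rfl, by omega⟩, rfl⟩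
            apply le_antisymm
            · have hmem1 : a (p + 1) ∈ a '' Set.Icc (p + 1) ((Gint p).max' hGintne + 1) :=
                ⟨p + 1, Set.mem_Icc.2 ⟨le_rfl, by omega⟩, rfl⟩
              have h1 := Nat.sInf_le hmem1
              omega
            · obtain ⟨i₀, hi₀, hai₀⟩ := Nat.sInf_mem hne'
              rw [Set.mem_Icc] at hi₀
              rw [← hai₀]
              exact hinterior i₀ hi₀.1 hi₀.2
          have hGintsub : Gint p ⊆ G := by
            intro g hg; exact ((hmemGint p g).1 hg).1
          have hbud' : (a (p + 1) + 1) * 2 ^ (κ - (WH.filter (fun q => q ≤ p)).card) ≤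
              (Gint p).card + 1 +
              sInf (a '' Set.Icc (p + 1) ((Gint p).max' hGintne + 1)) *
                2 ^ (κ - (WH.filter (fun q => q ≤ p)).card) := by
            rw [hμp, hap1]
            have hexp : (μ + 1 + 1) * 2 ^ (κ - (WH.filter (fun q => q ≤ p)).card) =
                (μ + 1) * 2 ^ (κ - (WH.filter (fun q => q ≤ p)).card) +
                2 ^ (κ - (WH.filter (fun q => q ≤ p)).card) := by ring
            linarith
          obtain ⟨b', e', hsb', hbe', hel', heG', h2', h3', hH'⟩ :=
            ih (κ - (WH.filter (fun q => q ≤ p)).card) (Gint p) (p + 1) hκ'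
              (by have := Finset.card_le_card hGintsub; omega)
              (fun g hg => hGl g (hGintsub hg))
              (fun g hg => by have := ((hmemGint p g).1 hg).2.1; omega)
              hGintne hbud'
          obtain ⟨he'G, he'p, _, _, he'neM⟩ := (hmemGint p (e' - 1)).1 heG'
          have he'leM : e' - 1 ≤ M := G.le_max' _ he'G
          have he'2 : p + 2 ≤ e' := by omega
          have he'M : e' ≤ M := by omega
          refine ⟨i1, e', hi1s, by omega, hel', he'G, ?_, ?_, ?_⟩
          · intro i h1 h2; rw [hai1]; exact hμle i (le_trans hi1s h1) (by omega)
          · intro i h1 h2; rw [hai1]; exact hfirst i h1 h2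
          · have hAsub : (↑(WH.filter (fun q => q ≤ p)) : Set ℕ) ⊆ Hs a G i1 e' := by
              intro q hq
              obtain ⟨hqWH, hqp⟩ := Finset.mem_filter.1 (Finset.mem_coe.1 hq)
              obtain ⟨haq, hq1, hqM, hsufq, hstrictq⟩ := claim1 q hqWH
              exact ⟨hq1, by omega, fun j hj1 hj2 => hsufq j hj1 (by omega), hstrictq⟩
            have hBsub : Hs a (Gint p) b' e' ⊆ Hs a G i1 e' :=
              Hs_lift a hGintsub (by omega) heG'
            have hdisj : Disjoint (↑(WH.filter (fun q => q ≤ p)) : Set ℕ)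
                (Hs a (Gint p) b' e') := by
              rw [Set.disjoint_left]
              intro q hq hq'
              have hqp : q ≤ p := (Finset.mem_filter.1 (Finset.mem_coe.1 hq)).2
              have hq1 : b' ≤ q := hq'.1
              omega
            calc κ = (WH.filter (fun q => q ≤ p)).card +
                  (κ - (WH.filter (fun q => q ≤ p)).card) := by omega
              _ ≤ (WH.filter (fun q => q ≤ p)).card + (Hs a (Gint p) b' e').ncard :=
                  add_le_add le_rfl hH'
              _ = (↑(WH.filter (fun q => q ≤ p)) : Set ℕ).ncard +
                  (Hs a (Gint p) b' e').ncard := by rw [Set.ncard_coe_finset]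
              _ = ((↑(WH.filter (fun q => q ≤ p)) : Set ℕ) ∪ Hs a (Gint p) b' e').ncard :=
                  (Set.ncard_union_eq hdisj (Finset.finite_toSet _) (Hs_finite _ _ _ _)).symm
              _ ≤ (Hs a G i1 e').ncard :=
                  Set.ncard_le_ncard (Set.union_subset hAsub hBsub) (Hs_finite _ _ _ _)
        · -- POOR
          push_neg at hrich
          have hfiber : ∀ p ∈ WH, (Gr.filter (fun g => hd g = p)).card ≤
              2 ^ (κ - (WH.filter (fun q => q ≤ p)).card) := by
            intro p hpWH
            obtain ⟨hap, hi1p, hpM, _, _⟩ := claim1 p hpWH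
            have hsubfib : Gr.filter (fun g => hd g = p) ⊆
                insert p (insert (if h : ((P.filter (fun q => p < q)).Nonempty) then
                  (P.filter (fun q => p < q)).min' h - 1 else M) (Gint p)) := by
              intro g hg
              obtain ⟨hgGr, hhdg⟩ := Finset.mem_filter.1 hg
              obtain ⟨hgG, hi1g⟩ := (hmemGr g).1 hgGr
              have hpg : p ≤ g := by rw [← hhdg]; exact hdle g
              have hgM : g ≤ M := G.le_max' g hgG
              simp only [Finset.mem_insert]
              by_cases hgp : g = p
              · exact Or.inl hgp
              by_cases hgbp : g = (if h : ((P.filter (fun q => p < q)).Nonempty) then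
                  (P.filter (fun q => p < q)).min' h - 1 else M)
              · exact Or.inr (Or.inl hgbp)
              refine Or.inr (Or.inr ((hmemGint p g).2
                ⟨hgG, lt_of_le_of_ne hpg (Ne.symm hgp), hhdg, ?_, ?_⟩))
              · intro hg1P
                have hpg1 : p < g + 1 := by omega
                have hne2 : (P.filter (fun q => p < q)).Nonempty :=
                  ⟨g + 1, Finset.mem_filter.2 ⟨hg1P, hpg1⟩⟩
                have hnxmem := Finset.min'_mem (P.filter (fun q => p < q)) hne2
                have hnxP : (P.filter (fun q => p < q)).min' hne2 ∈ P :=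
                  (Finset.mem_filter.1 hnxmem).1
                have hnxp : p < (P.filter (fun q => p < q)).min' hne2 :=
                  (Finset.mem_filter.1 hnxmem).2
                have hnxle : (P.filter (fun q => p < q)).min' hne2 ≤ g + 1 :=
                  Finset.min'_le _ _ (Finset.mem_filter.2 ⟨hg1P, hpg1⟩)
                have hgnx : g < (P.filter (fun q => p < q)).min' hne2 := by
                  by_contra hcon
                  push_neg at hcon
                  have := hdub g _ hnxP hcon
                  rw [hhdg] at this
                  omega
                have hbp : (if h : ((P.filter (fun q => p < q)).Nonempty) then
                    (P.filter (fun q => p < q)).min' h - 1 else M) =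
                    (P.filter (fun q => p < q)).min' hne2 - 1 := dif_pos hne2
                apply hgbp
                rw [hbp]
                omega
              · intro hgMeq
                by_cases hne2 : (P.filter (fun q => p < q)).Nonempty
                · obtain ⟨nx', hnx'⟩ := hne2
                  have hnx'P := (Finset.mem_filter.1 hnx').1
                  have hnx'p := (Finset.mem_filter.1 hnx').2
                  have hnx'M : nx' ≤ M := ((hmemP nx').1 hnx'P).1.2
                  have := hdub g nx' hnx'P (by omega)
                  rw [hhdg] at this
                  omega
                · have hbp : (if h : ((P.filter (fun q => p < q)).Nonempty) then
                      (P.filter (fun q => p < q)).min' h - 1 else M) = M := dif_neg hne2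
                  apply hgbp
                  rw [hbp, hgMeq]
            have hc1 := Finset.card_le_card hsubfib
            have hc2 := Finset.card_insert_le p (insert (if h : ((P.filter (fun q => p < q)).Nonempty) then
                  (P.filter (fun q => p < q)).min' h - 1 else M) (Gint p))
            have hc3 := Finset.card_insert_le (if h : ((P.filter (fun q => p < q)).Nonempty) then
                  (P.filter (fun q => p < q)).min' h - 1 else M) (Gint p)
            have hpoor := hrich p hpWH
            omega
          have hGrbound : Gr.card + 2 ^ (κ - WH.card) ≤ 2 ^ κ := by
            have hcardsum : Gr.card = ∑ p ∈ WH, (Gr.filter (fun g => hd g = p)).card :=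
              Finset.card_eq_sum_card_fiberwise
                (fun g hg => (hmemWH (hd g)).2 ⟨g, hg, rfl⟩)
            rw [hcardsum]
            exact sum_rank_bound WH.card WH κ _ rfl (by omega) hfiber
          have h2κw : 2 ≤ 2 ^ (κ - WH.card) := by
            have hκw : 1 ≤ κ - WH.card := by omega
            have := Nat.pow_le_pow_right (by norm_num : 1 ≤ 2) hκw
            simpa using this
          by_cases hB0 : B0.Nonempty
          · obtain ⟨hM0G, hM0i1'⟩ := (hmemB0 (B0.max' hB0)).1 (Finset.max'_mem B0 hB0)
            have hM0i1 : B0.max' hB0 < i1 := by omega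
            have hB0G : B0 ⊆ G := by intro g hg; exact ((hmemB0 g).1 hg).1
            have hB0cardlt : B0.card < G.card := by
              have hsubB : B0 ⊆ G.erase M := by
                intro g hg
                obtain ⟨hgG, hgi1⟩ := (hmemB0 g).1 hg
                exact Finset.mem_erase.2 ⟨by omega, hgG⟩
              have := Finset.card_le_card hsubB
              rw [Finset.card_erase_of_mem hMmem] at this
              omega
            by_cases hC : (if B0.max' hB0 + 1 = i1 then B0.erase (B0.max' hB0) else B0).Nonempty
            · have hCsubB0 : (if B0.max' hB0 + 1 = i1 then B0.erase (B0.max' hB0) else B0) ⊆ B0 := by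
                split
                · exact Finset.erase_subset _ _
                · exact Finset.Subset.refl _
              have hCG : (if B0.max' hB0 + 1 = i1 then B0.erase (B0.max' hB0) else B0) ⊆ G :=
                hCsubB0.trans hB0G
              have hMCi1 : (if B0.max' hB0 + 1 = i1 then B0.erase (B0.max' hB0) else B0).max' hC + 1 < i1 := by
                by_cases hsplit2 : B0.max' hB0 + 1 = i1
                · have hsubC : (if B0.max' hB0 + 1 = i1 then B0.erase (B0.max' hB0) else B0) ⊆
                      B0.erase (B0.max' hB0) := by
                    rw [if_pos hsplit2]
                  have hmem' := hsubC (Finset.max'_mem _ hC)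
                  have h1' := Finset.ne_of_mem_erase hmem'
                  have h2' := B0.le_max' _ (Finset.mem_of_mem_erase hmem')
                  omega
                · have h2' := B0.le_max' _ (hCsubB0 (Finset.max'_mem _ hC))
                  omega
              have hμCge : μ + 1 ≤ sInf (a ''
                  Set.Icc s ((if B0.max' hB0 + 1 = i1 then B0.erase (B0.max' hB0) else B0).max' hC + 1)) := by
                have hsMC : s ≤ (if B0.max' hB0 + 1 = i1 then B0.erase (B0.max' hB0) else B0).max' hC :=
                  hGs _ (hCG (Finset.max'_mem _ _))
                have hne' : (a '' Set.Icc s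
                    ((if B0.max' hB0 + 1 = i1 then B0.erase (B0.max' hB0) else B0).max' hC + 1)).Nonempty :=
                  ⟨a s, s, Set.mem_Icc.2 ⟨le_rfl, by omega⟩, rfl⟩
                obtain ⟨i₀, hi₀, hai₀⟩ := Nat.sInf_mem hne'
                rw [Set.mem_Icc] at hi₀
                rw [← hai₀]
                exact hfirst i₀ hi₀.1 (by omega)
              by_cases hCbud : (a s + 1) * 2 ^ κ ≤
                  (if B0.max' hB0 + 1 = i1 then B0.erase (B0.max' hB0) else B0).card + 1 +
                  sInf (a '' Set.Icc s
                    ((if B0.max' hB0 + 1 = i1 then B0.erase (B0.max' hB0) else B0).max' hC + 1)) * 2 ^ κ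
              · obtain ⟨b, e, hsb, hbe, hel, heC, h2, h3, hH⟩ :=
                  ih κ (if B0.max' hB0 + 1 = i1 then B0.erase (B0.max' hB0) else B0) s hκ
                    (by have h1' := Finset.card_le_card hCsubB0; omega)
                    (fun g hg => hGl g (hCG hg)) (fun g hg => hGs g (hCG hg)) hC hCbud
                exact ⟨b, e, hsb, hbe, hel, hCG heC, h2, h3,
                  le_trans hH (Set.ncard_le_ncard (Hs_lift a hCG le_rfl heC) (Hs_finite _ _ _ _))⟩
              · exfalso
                push_neg at hCbud
                have hB0C : B0.card ≤
                    (if B0.max' hB0 + 1 = i1 then B0.erase (B0.max' hB0) else B0).card + 1 := by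
                  by_cases hsplit2 : B0.max' hB0 + 1 = i1
                  · rw [if_pos hsplit2, Finset.card_erase_of_mem (Finset.max'_mem B0 hB0)]
                    have := Finset.card_pos.mpr hB0
                    omega
                  · rw [if_neg hsplit2]
                    omega
                have hmul : (μ + 1) * 2 ^ κ ≤ sInf (a '' Set.Icc s
                    ((if B0.max' hB0 + 1 = i1 then B0.erase (B0.max' hB0) else B0).max' hC + 1)) * 2 ^ κ :=
                  Nat.mul_le_mul_right _ hμCge
                have hexp : (μ + 1) * 2 ^ κ = μ * 2 ^ κ + 2 ^ κ := by ring
                linarith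
            · exfalso
              have hsplit2 : B0.max' hB0 + 1 = i1 := by
                by_contra hc
                rw [if_neg hc] at hC
                exact hC hB0
              rw [if_pos hsplit2] at hC
              have hB0card : B0.card = 1 := by
                have h0 : (B0.erase (B0.max' hB0)).card = 0 :=
                  Finset.card_eq_zero.2 (Finset.not_nonempty_iff_eq_empty.1 hC)
                rw [Finset.card_erase_of_mem (Finset.max'_mem B0 hB0)] at h0
                have := Finset.card_pos.mpr hB0
                omega
              have hasμ : μ + 1 ≤ a s := by
                refine hfirst s le_rfl ?_
                have := hGs _ hM0G
                omega
              have h1 : (μ + 2) * 2 ^ κ ≤ (a s + 1) * 2 ^ κ :=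
                Nat.mul_le_mul_right _ (by omega)
              have hexp : (μ + 2) * 2 ^ κ = μ * 2 ^ κ + 2 ^ κ + 2 ^ κ := by ring
              linarith
          · exfalso
            have hB0c : B0.card = 0 :=
              Finset.card_eq_zero.2 (Finset.not_nonempty_iff_eq_empty.1 hB0)
            have h1 : (μ + 1) * 2 ^ κ ≤ (a s + 1) * 2 ^ κ :=
              Nat.mul_le_mul_right _ (by omega)
            have hexp : (μ + 1) * 2 ^ κ = μ * 2 ^ κ + 2 ^ κ := by ring
            linarith
    · -- CASE α : minimum attained only at M + 1; drop the top element
      push_neg at hP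
      have hup : ∀ i, s ≤ i → i ≤ M → μ + 1 ≤ a i := by
        intro i h1 h2
        have hle := hμle i h1 (by omega)
        rcases lt_or_eq_of_le hle with h | h
        · exact h
        · exact absurd h.symm (hP i h1 h2)
      have hG'ne : (G.erase M).Nonempty := by
        rw [← Finset.card_pos, Finset.card_erase_of_mem hMmem]
        by_contra hc
        push_neg at hc
        have hcard1 : G.card = 1 := by omega
        have h1 : (μ + 2) * 2 ^ κ ≤ (a s + 1) * 2 ^ κ :=
          Nat.mul_le_mul_right _ (by have := hup s le_rfl hsM; omega)
        have hexp : (μ + 2) * 2 ^ κ = μ * 2 ^ κ + 2 * 2 ^ κ := by ring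
        rw [hcard1] at hbud
        linarith
      have hM'mem : (G.erase M).max' hG'ne ∈ G.erase M := Finset.max'_mem _ _
      have hM'M : (G.erase M).max' hG'ne + 1 ≤ M := by
        have h1 : (G.erase M).max' hG'ne ≠ M := Finset.ne_of_mem_erase hM'mem
        have h2 : (G.erase M).max' hG'ne ≤ M :=
          G.le_max' _ (Finset.mem_of_mem_erase hM'mem)
        omega
      have hsM' : s ≤ (G.erase M).max' hG'ne :=
        hGs _ (Finset.mem_of_mem_erase hM'mem)
      have hμ'ge : μ + 1 ≤ sInf (a '' Set.Icc s ((G.erase M).max' hG'ne + 1)) := by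
        have hne' : (a '' Set.Icc s ((G.erase M).max' hG'ne + 1)).Nonempty :=
          ⟨a s, s, Set.mem_Icc.2 ⟨le_rfl, by omega⟩, rfl⟩
        obtain ⟨i₀, hi₀, hai₀⟩ := Nat.sInf_mem hne'
        rw [Set.mem_Icc] at hi₀
        rw [← hai₀]
        exact hup i₀ hi₀.1 (by omega)
      have hcardG : G.card = (G.erase M).card + 1 := by
        rw [Finset.card_erase_of_mem hMmem]
        omega
      have hbud' : (a s + 1) * 2 ^ κ ≤ (G.erase M).card + 1 +
          sInf (a '' Set.Icc s ((G.erase M).max' hG'ne + 1)) * 2 ^ κ := by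
        have h1 : (μ + 1) * 2 ^ κ ≤
            sInf (a '' Set.Icc s ((G.erase M).max' hG'ne + 1)) * 2 ^ κ :=
          Nat.mul_le_mul_right _ hμ'ge
        have hexp : (μ + 1) * 2 ^ κ = μ * 2 ^ κ + 2 ^ κ := by ring
        linarith
      obtain ⟨b, e, hsb, hbe, hel, heG', h2, h3, hH⟩ :=
        ih κ (G.erase M) s hκ (by omega)
          (fun g hg => hGl g (Finset.mem_of_mem_erase hg))
          (fun g hg => hGs g (Finset.mem_of_mem_erase hg)) hG'ne hbud'
      exact ⟨b, e, hsb, hbe, hel, Finset.mem_of_mem_erase heG', h2, h3,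
        le_trans hH (Set.ncard_le_ncard
          (Hs_lift a (Finset.erase_subset _ _) le_rfl heG') (Hs_finite _ _ _ _))⟩

end IncSeqAux

/-- **Corollary.** Let `a₀,…,a_l` be positive natural numbers with `a_{i+1} ≤ a_i + 1`,
and let `G ⊆ {0,…,l-1}` with `|G| ≥ a₀ · 2^k`. Then there are `b < e ≤ l` with
`e - 1 ∈ G`, `a_b` minimal on `[b,e]`, `a_i > a_b` for `i < b`, and `|H_{b,e}| ≥ k`. -/
theorem increasing_number_sequence_cor (k l : ℕ) (hk : 1 ≤ k) (a : ℕ → ℕ)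
    (hpos : ∀ i ≤ l, 1 ≤ a i)
    (hstep : ∀ i < l, a (i + 1) ≤ a i + 1)
    (G : Finset ℕ) (hGsub : ∀ g ∈ G, g < l) (hcard : a 0 * 2 ^ k ≤ G.card) :
    ∃ b e, b < e ∧ e ≤ l ∧ e - 1 ∈ G ∧
      (∀ i, b ≤ i → i ≤ e → a b ≤ a i) ∧
      (∀ i < b, a b < a i) ∧
      k ≤ {i : ℕ | b ≤ i ∧ i ≤ e - 1 ∧ (∀ j, i ≤ j → j ≤ e → a i ≤ a j) ∧
        (∀ j, i < j → j ≤ sInf {g : ℕ | g ∈ G ∧ i ≤ g} → a i < a j)}.ncard := by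
  have h2k : 2 ≤ 2 ^ k := by
    have := Nat.pow_le_pow_right (by norm_num : 1 ≤ 2) hk
    simpa using this
  have ha0 : 1 ≤ a 0 := hpos 0 (Nat.zero_le l)
  have hG_ne : G.Nonempty := by
    rw [← Finset.card_pos]
    have h1 : 2 ≤ a 0 * 2 ^ k := by
      calc 2 ≤ 2 ^ k := h2k
        _ = 1 * 2 ^ k := (one_mul _).symm
        _ ≤ a 0 * 2 ^ k := Nat.mul_le_mul_right _ ha0
    omega
  have hMl : G.max' hG_ne < l := hGsub _ (G.max'_mem hG_ne)
  have hμ1 : 1 ≤ sInf (a '' Set.Icc 0 (G.max' hG_ne + 1)) := by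
    have hne' : (a '' Set.Icc 0 (G.max' hG_ne + 1)).Nonempty :=
      ⟨a 0, 0, Set.mem_Icc.2 ⟨le_rfl, by omega⟩, rfl⟩
    obtain ⟨i₀, hi₀, hai₀⟩ := Nat.sInf_mem hne'
    rw [Set.mem_Icc] at hi₀
    rw [← hai₀]
    exact hpos i₀ (by omega)
  have hbud : (a 0 + 1) * 2 ^ k ≤ G.card + 1 +
      sInf (a '' Set.Icc 0 (G.max' hG_ne + 1)) * 2 ^ k := by
    have h1 : 1 * 2 ^ k ≤ sInf (a '' Set.Icc 0 (G.max' hG_ne + 1)) * 2 ^ k :=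
      Nat.mul_le_mul_right _ hμ1
    have hexp : (a 0 + 1) * 2 ^ k = a 0 * 2 ^ k + 2 ^ k := by ring
    have h2 : (1 : ℕ) * 2 ^ k = 2 ^ k := one_mul _
    linarith
  obtain ⟨b, e, _, hbe, hel, heG, h2, h3, hH⟩ :=
    IncSeqAux.main l a hstep (k + G.card) k G 0 hk le_rfl hGsub
      (fun g _ => Nat.zero_le g) hG_ne hbud
  exact ⟨b, e, hbe, hel, heG, h2, fun i hi => h3 i (Nat.zero_le i) hi, hH⟩
end

section
/- Fix integers c ≥ 2 and m ≥ 0, and define sequences M_1 = (m+1)·c, M_j = 2^{M_{j−1}} for j ≥ 2; M'_1 = m·c, M'_j = 2^{M'_{j−1}} for j ≥ 2; and N'_0 = c, N'_j = M'_j · 2^{N'_{j−1}} for j ≥ 1. Then M_i − M'_i ≥ N'_{i−1} for all i ≥ 1. -/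
/-!
Induct on the invariant `M'_i + max N'_{i-1} 2 ≤ M_i`, which at `i = 1` is `m·c + c = (m+1)·c`.
Passing to `i + 1` exponentiates: with `a = M'_i` and `b = max N'_{i-1} 2`, the bound
`2^a + a·2^b + 2 ≤ 2^(a+b)` (valid for `b ≥ 2`) gives `M'_{i+1} + N'_i + 2 ≤ M_{i+1}`.
The `max … 2` cannot be dropped: `N'_1 = 0` when `m = 0`.
-/

theorem two_pow_add_mul_two_pow_add_two_le (a : ℕ) {b : ℕ} (hb : 2 ≤ b) :
    2 ^ a + a * 2 ^ b + 2 ≤ 2 ^ (a + b) := by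
  have hb4 : 4 ≤ 2 ^ b :=
    calc 4 = 2 ^ 2 := by norm_num
      _ ≤ 2 ^ b := Nat.pow_le_pow_right (by norm_num) hb
  rw [pow_add]
  rcases a with _ | k
  · omega
  · have hk : 2 * (k + 1) ≤ 2 ^ (k + 1) := by
      rw [pow_succ, mul_comm]
      exact Nat.mul_le_mul_right 2 (Nat.lt_two_pow_self)
    nlinarith

theorem two_pow_add_max_le {a b A : ℕ} (h : a + max b 2 ≤ A) :
    2 ^ a + max (a * 2 ^ b) 2 ≤ 2 ^ A := by
  have hmono : a * 2 ^ b ≤ a * 2 ^ max b 2 :=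
    Nat.mul_le_mul_left a (Nat.pow_le_pow_right (by norm_num) (le_max_left b 2))
  calc 2 ^ a + max (a * 2 ^ b) 2 ≤ 2 ^ a + a * 2 ^ max b 2 + 2 := by omega
    _ ≤ 2 ^ (a + max b 2) := two_pow_add_mul_two_pow_add_two_le a (le_max_right b 2)
    _ ≤ 2 ^ A := Nat.pow_le_pow_right (by norm_num) h

/-- **Lemma.** With `M₁ = (m+1)·c`, `M_{j+1} = 2^{M_j}`, `M'₁ = m·c`,
`M'_{j+1} = 2^{M'_j}`, `N'₀ = c`, `N'_{j+1} = M'_{j+1} · 2^{N'_j}` (for `c ≥ 2`),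
we have `M_i - M'_i ≥ N'_{i-1}` for all `i ≥ 1`. -/
theorem M_minus_M'_ge_N' (c m : ℕ) (hc : 2 ≤ c)
    (M M' N' : ℕ → ℕ)
    (hM1 : M 1 = (m + 1) * c) (hM : ∀ j, 1 ≤ j → M (j + 1) = 2 ^ M j)
    (hM'1 : M' 1 = m * c) (hM' : ∀ j, 1 ≤ j → M' (j + 1) = 2 ^ M' j)
    (hN'0 : N' 0 = c) (hN' : ∀ j, N' (j + 1) = M' (j + 1) * 2 ^ N' j) :
    ∀ i, 1 ≤ i → M' i + N' (i - 1) ≤ M i := by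
  intro i hi
  have gap : M' i + max (N' (i - 1)) 2 ≤ M i := by
    induction i, hi using Nat.le_induction with
    | base => simp [hM1, hM'1, hN'0, hc, add_mul, add_comm]
    | succ i hi ih =>
      obtain ⟨j, rfl⟩ : ∃ j, i = j + 1 := ⟨i - 1, by omega⟩
      rw [hM _ hi, hM' _ hi, Nat.add_sub_cancel, hN']
      exact two_pow_add_max_le (by simpa using ih)
  exact (Nat.add_le_add_left (le_max_left _ _) _).trans gap
end
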